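/- In the ADMM setting, assuming additionally that A₁ and A₂ are injective (full column rank): there exist x₁'' ∈ E₁, x₂'' ∈ E₂, y'' ∈ F such that (x₁'', x₂'', y'') is a KKT pair of the problem (i.e., -A₁*y'' ∈ ∂f₁(x₁''), -A₂*y'' ∈ ∂f₂(x₂''), and A₁x₁'' + A₂x₂'' = b) and the ADMM iterates converge: x₁^k → x₁'', x₂^k → x₂'', and y^k → y'' as k → ∞. -/

import Mathlib

open Filter Topology Set
open scoped RealInnerProductSpace

/-- The subdifferential of convex analysis: the set of global lower-bounding slopes. -/
def SubderivAt {E : Type*} [NormedAddCommGroup E] [InnerProductSpace ℝ E]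
    (f : E → ℝ) (x : E) : Set E :=
  {g : E | ∀ y, f x + ⟪g, y - x⟫ ≤ f y}

section Helpers

lemma subderiv_mono {E : Type*} [NormedAddCommGroup E] [InnerProductSpace ℝ E]
    {f : E → ℝ} {x z g h : E} (hg : g ∈ SubderivAt f x) (hh : h ∈ SubderivAt f z) :
    0 ≤ ⟪g - h, x - z⟫ := by
  have h1 := hg z
  have h2 := hh x
  have e1 : ⟪g, z - x⟫ = -⟪g, x - z⟫ := by rw [← inner_neg_right]; rw [neg_sub]
  have e2 : ⟪g - h, x - z⟫ = ⟪g, x - z⟫ - ⟪h, x - z⟫ := inner_sub_left g h (x - z)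
  rw [e1] at h1
  linarith

lemma nonneg_of_forall_small {C a : ℝ} (hC : 0 ≤ C)
    (h : ∀ t : ℝ, 0 < t → t ≤ 1 → -(t * C) ≤ a) : 0 ≤ a := by
  by_contra hn
  push_neg at hn
  rcases eq_or_lt_of_le hC with hC0 | hC0
  · have := h 1 one_pos le_rfl; rw [← hC0] at this; linarith
  · have ht : (0:ℝ) < min 1 (-a / (2 * C)) :=
      lt_min one_pos (div_pos (by linarith) (by linarith))
    have ht1 : min 1 (-a / (2 * C)) ≤ 1 := min_le_left _ _
    have ht2 : min 1 (-a / (2 * C)) ≤ -a / (2 * C) := min_le_right _ _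
    have hle := h _ ht ht1
    have hmul : min 1 (-a / (2 * C)) * C ≤ (-a / (2 * C)) * C :=
      mul_le_mul_of_nonneg_right ht2 hC
    have heq : (-a / (2 * C)) * C = -a / 2 := by field_simp
    nlinarith

/-- First-order optimality condition for the ADMM subproblems. -/
lemma foc {E F : Type*} [NormedAddCommGroup E] [InnerProductSpace ℝ E] [FiniteDimensional ℝ E]
    [NormedAddCommGroup F] [InnerProductSpace ℝ F] [FiniteDimensional ℝ F]
    {f : E → ℝ} (cf : ConvexOn ℝ Set.univ f) (A : E →L[ℝ] F) (y c : F) {ρ : ℝ} (hρ : 0 < ρ)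
    {xb : E}
    (hmin : ∀ z, f xb + ⟪y, A xb + c⟫ + ρ/2 * ‖A xb + c‖^2
      ≤ f z + ⟪y, A z + c⟫ + ρ/2 * ‖A z + c‖^2) :
    -(ContinuousLinearMap.adjoint A (y + ρ • (A xb + c))) ∈ SubderivAt f xb := by
  intro z
  set d := z - xb with hd
  set g : E := -(ContinuousLinearMap.adjoint A (y + ρ • (A xb + c))) with hg
  have hgd : ⟪g, d⟫ = -(⟪y, A d⟫ + ρ * ⟪A xb + c, A d⟫) := by
    rw [hg, inner_neg_left, ContinuousLinearMap.adjoint_inner_left, inner_add_left,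
      real_inner_smul_left]
  have key : ∀ t : ℝ, 0 < t → t ≤ 1 →
      -(t * (ρ/2 * ‖A d‖^2)) ≤ f z - f xb - ⟪g, d⟫ := by
    intro t ht0 ht1
    have hconv : f (xb + t • d) ≤ f xb + t * (f z - f xb) := by
      have hc2 := cf.2 (mem_univ z) (mem_univ xb) (le_of_lt ht0)
        (by linarith : (0:ℝ) ≤ 1 - t) (by ring)
      have heq : t • z + (1 - t) • xb = xb + t • d := by rw [hd]; module
      rw [heq] at hc2
      simp only [smul_eq_mul] at hc2
      linarith
    have hmin' := hmin (xb + t • d)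
    have hAzt : A (xb + t • d) + c = (A xb + c) + t • A d := by
      rw [map_add, map_smul]; abel
    have hQ : ⟪y, A (xb + t • d) + c⟫ + ρ/2 * ‖A (xb + t • d) + c‖^2
        = ⟪y, A xb + c⟫ + ρ/2 * ‖A xb + c‖^2
          + t * (⟪y, A d⟫ + ρ * ⟪A xb + c, A d⟫) + t^2 * (ρ/2 * ‖A d‖^2) := by
      rw [hAzt, inner_add_right, norm_add_sq_real, real_inner_smul_right, norm_smul,
        real_inner_smul_right]
      simp only [mul_pow, Real.norm_eq_abs, sq_abs]
      ring
    have h3 : 0 ≤ t * (f z - f xb) + t * (⟪y, A d⟫ + ρ * ⟪A xb + c, A d⟫)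
        + t^2 * (ρ/2 * ‖A d‖^2) := by linarith
    have h4 : 0 ≤ (f z - f xb) + (⟪y, A d⟫ + ρ * ⟪A xb + c, A d⟫) + t * (ρ/2 * ‖A d‖^2) := by
      refine le_of_mul_le_mul_left ?_ ht0
      have expand : t * ((f z - f xb) + (⟪y, A d⟫ + ρ * ⟪A xb + c, A d⟫) + t * (ρ/2 * ‖A d‖^2))
          = t * (f z - f xb) + t * (⟪y, A d⟫ + ρ * ⟪A xb + c, A d⟫)
            + t^2 * (ρ/2 * ‖A d‖^2) := by ring
      rw [mul_zero, expand]
      linarith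
    rw [hgd]; linarith
  have hfin : 0 ≤ f z - f xb - ⟪g, d⟫ := nonneg_of_forall_small (by positivity) key
  linarith

lemma adj_pair {E F : Type*} [NormedAddCommGroup E] [InnerProductSpace ℝ E]
    [FiniteDimensional ℝ E] [NormedAddCommGroup F] [InnerProductSpace ℝ F]
    [FiniteDimensional ℝ F] (A : E →L[ℝ] F) (z w' : F) (xa xb : E)
    (h : 0 ≤ ⟪-(ContinuousLinearMap.adjoint A z) - -(ContinuousLinearMap.adjoint A w'),
      xa - xb⟫) :
    ⟪z - w', A xa - A xb⟫ ≤ 0 := by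
  have e1 : -(ContinuousLinearMap.adjoint A z) - -(ContinuousLinearMap.adjoint A w')
      = -(ContinuousLinearMap.adjoint A (z - w')) := by rw [map_sub]; abel
  rw [e1, inner_neg_left, ContinuousLinearMap.adjoint_inner_left] at h
  rw [← map_sub]
  linarith

lemma descent_seq {G a : ℕ → ℝ} (h0 : ∀ k, 0 ≤ G k) (ha : ∀ k, 0 ≤ a k)
    (hstep : ∀ k, G (k+1) + a k ≤ G k) :
    (∀ j k : ℕ, j ≤ k → G k ≤ G j) ∧ Summable a := by
  have hant : Antitone G := antitone_nat_of_succ_le (fun k => by linarith [hstep k, ha k])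
  refine ⟨fun j k h => hant h, ?_⟩
  have hbound : ∀ n, (∑ i ∈ Finset.range n, a i) + G n ≤ G 0 := by
    intro n
    induction n with
    | zero => simp
    | succ n ih => rw [Finset.sum_range_succ]; linarith [hstep n]
  exact summable_of_sum_range_le ha (fun n => by linarith [hbound n, h0 n])

lemma antitone_tendsto_zero {g : ℕ → ℝ} (hstep : ∀ k, g (k+1) ≤ g k) (h0 : ∀ k, 0 ≤ g k)
    {ψ : ℕ → ℕ} (hψ : Tendsto ψ atTop atTop)
    (hsub : Tendsto (fun j => g (ψ j)) atTop (𝓝 0)) :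
    Tendsto g atTop (𝓝 0) := by
  have hant : Antitone g := antitone_nat_of_succ_le hstep
  have hbdd : BddBelow (Set.range g) := ⟨0, fun x hx => by
    obtain ⟨n, rfl⟩ := hx; exact h0 n⟩
  have h1 : Tendsto g atTop (𝓝 (⨅ n, g n)) := tendsto_atTop_ciInf hant hbdd
  have h2 : Tendsto (fun j => g (ψ j)) atTop (𝓝 (⨅ n, g n)) := h1.comp hψ
  have := tendsto_nhds_unique h2 hsub
  rwa [this] at h1

lemma tendsto_zero_of_normsq {E : Type*} [NormedAddCommGroup E] {g : ℕ → E}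
    (h : Tendsto (fun k => ‖g k‖^2) atTop (𝓝 0)) : Tendsto g atTop (𝓝 0) := by
  rw [tendsto_zero_iff_norm_tendsto_zero]
  have h2 : Tendsto (fun k => Real.sqrt (‖g k‖^2)) atTop (𝓝 (Real.sqrt 0)) :=
    (Real.continuous_sqrt.tendsto 0).comp h
  have h3 : (fun k => Real.sqrt (‖g k‖^2)) = fun k => ‖g k‖ :=
    funext fun k => Real.sqrt_sq (norm_nonneg _)
  rw [h3, Real.sqrt_zero] at h2
  exact h2

lemma tendsto_normsq_zero {E : Type*} [NormedAddCommGroup E] {g : ℕ → E} {a : E}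
    (h : Tendsto g atTop (𝓝 a)) : Tendsto (fun k => ‖g k - a‖^2) atTop (𝓝 0) := by
  have h1 : Tendsto (fun k => g k - a) atTop (𝓝 0) := by
    simpa using h.sub_const a
  have h2 := (h1.norm).pow 2
  simpa using h2

end Helpers

variable {E₁ : Type*} [NormedAddCommGroup E₁] [InnerProductSpace ℝ E₁] [FiniteDimensional ℝ E₁]
variable {E₂ : Type*} [NormedAddCommGroup E₂] [InnerProductSpace ℝ E₂] [FiniteDimensional ℝ E₂]
variable {F : Type*} [NormedAddCommGroup F] [InnerProductSpace ℝ F] [FiniteDimensional ℝ F]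

/-- The augmented Lagrangian function
`L_ρ(x₁, x₂, y) = f₁ x₁ + f₂ x₂ + ⟨y, A₁x₁ + A₂x₂ - b⟩ + (ρ/2)‖A₁x₁ + A₂x₂ - b‖²`. -/
noncomputable def Augmented_Lagrangian_Function (f₁ : E₁ → ℝ) (f₂ : E₂ → ℝ)
    (A₁ : E₁ →L[ℝ] F) (A₂ : E₂ →L[ℝ] F) (b : F) (ρ : ℝ) (x₁ : E₁) (x₂ : E₂) (y : F) : ℝ :=
  f₁ x₁ + f₂ x₂ + ⟪y, A₁ x₁ + A₂ x₂ - b⟫ + ρ / 2 * ‖A₁ x₁ + A₂ x₂ - b‖ ^ 2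

set_option maxHeartbeats 1000000 in
/-- The one-step descent estimate for the ADMM Lyapunov function, valid for an arbitrary
KKT point `(p, q, w)`. -/
lemma lyapunov_step
    (f₁ : E₁ → ℝ) (f₂ : E₂ → ℝ) (A₁ : E₁ →L[ℝ] F) (A₂ : E₂ →L[ℝ] F) (b : F)
    (ρ τ s α β : ℝ) (hρ : 0 < ρ) (hτ₀ : 0 < τ)
    (hs : |1 - τ| ≤ s) (hα : 0 < α) (hβ : s = β * α)
    (x₁ : ℕ → E₁) (x₂ : ℕ → E₂) (y : ℕ → F)
    (P1 : ∀ k, -(ContinuousLinearMap.adjoint A₁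
      (y k + ρ • (A₁ (x₁ (k+1)) + A₂ (x₂ k) - b))) ∈ SubderivAt f₁ (x₁ (k+1)))
    (P2 : ∀ k, -(ContinuousLinearMap.adjoint A₂
      (y k + ρ • (A₁ (x₁ (k+1)) + A₂ (x₂ (k+1)) - b))) ∈ SubderivAt f₂ (x₂ (k+1)))
    (itery : ∀ k, y (k+1) = y k + (τ*ρ) • (A₁ (x₁ (k+1)) + A₂ (x₂ (k+1)) - b))
    (p : E₁) (q : E₂) (w : F)
    (hk1 : -(ContinuousLinearMap.adjoint A₁ w) ∈ SubderivAt f₁ p)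
    (hk2 : -(ContinuousLinearMap.adjoint A₂ w) ∈ SubderivAt f₂ q)
    (hk3 : A₁ p + A₂ q = b) :
    ∀ k : ℕ,
      (1/(τ*ρ) * ‖y (k+2) - w‖^2 + ρ * ‖A₂ (x₂ (k+2)) - A₂ q‖^2
        + s*α*ρ * ‖A₁ (x₁ (k+2)) + A₂ (x₂ (k+2)) - b‖^2)
      + (2 - τ - s*α)*ρ * ‖A₁ (x₁ (k+2)) + A₂ (x₂ (k+2)) - b‖^2
      + (1 - β)*ρ * ‖A₂ (x₂ (k+2)) - A₂ (x₂ (k+1))‖^2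
      ≤ 1/(τ*ρ) * ‖y (k+1) - w‖^2 + ρ * ‖A₂ (x₂ (k+1)) - A₂ q‖^2
        + s*α*ρ * ‖A₁ (x₁ (k+1)) + A₂ (x₂ (k+1)) - b‖^2 := by
  intro k
  have hs0 : 0 ≤ s := le_trans (abs_nonneg _) hs
  have hβ0 : 0 ≤ β := by
    have hβeq : β = s / α := by field_simp [hβ]; exact hβ.symm
    rw [hβeq]; exact div_nonneg hs0 (le_of_lt hα)
  set u : F := A₁ (x₁ (k+2)) + A₂ (x₂ (k+2)) - b with hu
  set rk : F := A₁ (x₁ (k+1)) + A₂ (x₂ (k+1)) - b with hrk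
  set v : F := A₂ (x₂ (k+2)) - A₂ (x₂ (k+1)) with hv
  set e2 : F := A₂ (x₂ (k+2)) - A₂ q with he2
  set e2' : F := A₂ (x₂ (k+1)) - A₂ q with he2'
  set ey : F := y (k+1) - w with hey
  have hM1 : ⟪ey + ρ • (u - v), u - e2⟫ ≤ 0 := by
    have h0 := adj_pair A₁ (y (k+1) + ρ • (A₁ (x₁ (k+2)) + A₂ (x₂ (k+1)) - b)) w
      (x₁ (k+2)) p (subderiv_mono (P1 (k+1)) hk1)
    have hv1 : (y (k+1) + ρ • (A₁ (x₁ (k+2)) + A₂ (x₂ (k+1)) - b)) - w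
        = ey + ρ • (u - v) := by
      rw [hey, hu, hv]; module
    have hv2 : A₁ (x₁ (k+2)) - A₁ p = u - e2 := by
      rw [hu, he2, ← hk3]; abel
    rw [hv1, hv2] at h0
    exact h0
  have hM2 : ⟪ey + ρ • u, e2⟫ ≤ 0 := by
    have h0 := adj_pair A₂ (y (k+1) + ρ • (A₁ (x₁ (k+2)) + A₂ (x₂ (k+2)) - b)) w
      (x₂ (k+2)) q (subderiv_mono (P2 (k+1)) hk2)
    have hv1 : (y (k+1) + ρ • (A₁ (x₁ (k+2)) + A₂ (x₂ (k+2)) - b)) - w = ey + ρ • u := by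
      rw [hey, hu]; module
    have hv2 : A₂ (x₂ (k+2)) - A₂ q = e2 := by rw [he2]
    rw [hv1, hv2] at h0
    exact h0
  have hM3 : ⟪(τ*ρ) • rk + ρ • u - ρ • rk, v⟫ ≤ 0 := by
    have h0 := adj_pair A₂ (y (k+1) + ρ • (A₁ (x₁ (k+2)) + A₂ (x₂ (k+2)) - b))
      (y k + ρ • (A₁ (x₁ (k+1)) + A₂ (x₂ (k+1)) - b))
      (x₂ (k+2)) (x₂ (k+1)) (subderiv_mono (P2 (k+1)) (P2 k))
    have hyk : y (k+1) = y k + (τ*ρ) • rk := by rw [hrk]; exact itery k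
    have hv1 : (y (k+1) + ρ • (A₁ (x₁ (k+2)) + A₂ (x₂ (k+2)) - b))
        - (y k + ρ • (A₁ (x₁ (k+1)) + A₂ (x₂ (k+1)) - b))
        = (τ*ρ) • rk + ρ • u - ρ • rk := by
      rw [hyk, hu, hrk]; module
    have hv2 : A₂ (x₂ (k+2)) - A₂ (x₂ (k+1)) = v := by rw [hv]
    rw [hv1, hv2] at h0
    exact h0
  have hs1 : ⟪ey, u⟫ - ⟪ey, e2⟫ + ρ*⟪u, u⟫ - ρ*⟪u, e2⟫ - ρ*⟪v, u⟫ + ρ*⟪v, e2⟫ ≤ 0 := by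
    simp only [inner_add_left, inner_sub_left, inner_sub_right, real_inner_smul_left] at hM1
    linarith
  have hs2 : ⟪ey, e2⟫ + ρ*⟪u, e2⟫ ≤ 0 := by
    simp only [inner_add_left, real_inner_smul_left] at hM2
    linarith
  have hs3 : (τ*ρ)*⟪rk, v⟫ + ρ*⟪u, v⟫ - ρ*⟪rk, v⟫ ≤ 0 := by
    simp only [inner_add_left, inner_sub_left, real_inner_smul_left] at hM3
    linarith
  have hyv : y (k+2) - w = ey + (τ*ρ) • u := by
    have hit : y (k+2) = y (k+1) + (τ*ρ) • u := by rw [hu]; exact itery (k+1)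
    rw [hit, hey]; module
  have hτρ : (0:ℝ) < τ*ρ := mul_pos hτ₀ hρ
  have hN1 : 1/(τ*ρ) * ‖y (k+2) - w‖^2
      = 1/(τ*ρ) * ‖ey‖^2 + 2*⟪ey, u⟫ + (τ*ρ)*‖u‖^2 := by
    rw [hyv, norm_add_sq_real, real_inner_smul_right, norm_smul]
    simp only [Real.norm_eq_abs, mul_pow, sq_abs]
    field_simp
  have he2v : e2 = e2' + v := by rw [he2, he2', hv]; abel
  have hN2 : ‖e2‖^2 = ‖e2'‖^2 + 2*⟪e2', v⟫ + ‖v‖^2 := by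
    rw [he2v]; exact norm_add_sq_real _ _
  have huu : ⟪u, u⟫ = ‖u‖^2 := real_inner_self_eq_norm_sq u
  have c1 : ⟪v, u⟫ = ⟪u, v⟫ := real_inner_comm u v
  have c2 : ⟪v, e2⟫ = ⟪e2', v⟫ + ‖v‖^2 := by
    rw [he2v, inner_add_right, real_inner_comm v e2', real_inner_self_eq_norm_sq]
  have hCS : (1-τ)*⟪rk, v⟫ ≤ s*(‖rk‖*‖v‖) := by
    calc (1-τ)*⟪rk, v⟫ ≤ |(1-τ)*⟪rk, v⟫| := le_abs_self _
    _ = |1-τ| * |⟪rk, v⟫| := abs_mul _ _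
    _ ≤ s * (‖rk‖*‖v‖) :=
        mul_le_mul hs (abs_real_inner_le_norm _ _) (abs_nonneg _) hs0
  have hAM : s*(‖rk‖*‖v‖) ≤ s*α/2*‖rk‖^2 + β/2*‖v‖^2 := by
    rw [hβ]
    nlinarith [mul_nonneg hβ0 (sq_nonneg (α*‖rk‖ - ‖v‖))]
  have hCS' := mul_le_mul_of_nonneg_left hCS hρ.le
  have hAM' := mul_le_mul_of_nonneg_left hAM hρ.le
  rw [huu, c1, c2] at hs1
  rw [hN1, hN2]
  linarith [hs1, hs2, hs3, hCS', hAM']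

set_option maxHeartbeats 2000000 in
theorem ADMM_convergence
    (f₁ : E₁ → ℝ) (f₂ : E₂ → ℝ) (A₁ : E₁ →L[ℝ] F) (A₂ : E₂ →L[ℝ] F) (b : F)
    (lscf₁ : LowerSemicontinuous f₁) (lscf₂ : LowerSemicontinuous f₂)
    (cf₁ : ConvexOn ℝ Set.univ f₁) (cf₂ : ConvexOn ℝ Set.univ f₂)
    -- a KKT pair (x₁*, x₂*, y*) of the problem
    (x₁s : E₁) (x₂s : E₂) (ys : F)
    (kkt₁ : -(ContinuousLinearMap.adjoint A₁ ys) ∈ SubderivAt f₁ x₁s)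
    (kkt₂ : -(ContinuousLinearMap.adjoint A₂ ys) ∈ SubderivAt f₂ x₂s)
    (kkt₃ : A₁ x₁s + A₂ x₂s = b)
    -- the parameters and the ADMM iterates
    (ρ τ : ℝ) (hρ : 0 < ρ) (hτ₀ : 0 < τ) (hτ₁ : τ < (1 + Real.sqrt 5) / 2)
    (x₁ : ℕ → E₁) (x₂ : ℕ → E₂) (y : ℕ → F)
    (iterx₁ : ∀ k, IsMinOn
      (fun a => Augmented_Lagrangian_Function f₁ f₂ A₁ A₂ b ρ a (x₂ k) (y k))
      Set.univ (x₁ (k + 1)))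
    (uiterx₁ : ∀ k a, IsMinOn
      (fun a => Augmented_Lagrangian_Function f₁ f₂ A₁ A₂ b ρ a (x₂ k) (y k))
      Set.univ a → a = x₁ (k + 1))
    (iterx₂ : ∀ k, IsMinOn
      (fun a => Augmented_Lagrangian_Function f₁ f₂ A₁ A₂ b ρ (x₁ (k + 1)) a (y k))
      Set.univ (x₂ (k + 1)))
    (uiterx₂ : ∀ k a, IsMinOn
      (fun a => Augmented_Lagrangian_Function f₁ f₂ A₁ A₂ b ρ (x₁ (k + 1)) a (y k))
      Set.univ a → a = x₂ (k + 1))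
    (itery : ∀ k, y (k + 1) = y k + (τ * ρ) • (A₁ (x₁ (k + 1)) + A₂ (x₂ (k + 1)) - b))
    (fullrank₁ : Function.Injective A₁) (fullrank₂ : Function.Injective A₂) :
    ∃ (x₁'' : E₁) (x₂'' : E₂) (y'' : F),
      (-(ContinuousLinearMap.adjoint A₁ y'') ∈ SubderivAt f₁ x₁'' ∧
        -(ContinuousLinearMap.adjoint A₂ y'') ∈ SubderivAt f₂ x₂'' ∧
        A₁ x₁'' + A₂ x₂'' = b) ∧
      Tendsto x₁ atTop (𝓝 x₁'') ∧ Tendsto x₂ atTop (𝓝 x₂'') ∧ Tendsto y atTop (𝓝 y'') := by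
  -- basic parameter facts
  have h5 : Real.sqrt 5 ^ 2 = 5 := Real.sq_sqrt (by norm_num)
  have h5n : (0:ℝ) ≤ Real.sqrt 5 := Real.sqrt_nonneg 5
  have hτ2 : τ < 2 := by nlinarith
  have h51 : (1:ℝ) ≤ Real.sqrt 5 := by nlinarith
  have hsq : (1-τ)^2 < 2 - τ := by
    nlinarith [mul_pos (show (0:ℝ) < (1+Real.sqrt 5)/2 - τ by linarith)
      (show (0:ℝ) < τ + (Real.sqrt 5 - 1)/2 by linarith)]
  set s : ℝ := |1 - τ| with hsdef
  have hs0 : 0 ≤ s := abs_nonneg _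
  have hs2 : s^2 < 2 - τ := by rw [hsdef, sq_abs]; exact hsq
  have h1s : (0:ℝ) < 1 + s := by linarith
  set α : ℝ := (s + (2 - τ))/(1 + s) with hαdef
  have hαpos : 0 < α := div_pos (by linarith) h1s
  have hαval : α * (1 + s) = s + (2 - τ) := by
    rw [hαdef]; field_simp
  set β : ℝ := s / α with hβdef
  have hβ : s = β * α := by rw [hβdef]; field_simp
  have hβ0 : 0 ≤ β := div_nonneg hs0 hαpos.le
  have hsα : s*α < 2 - τ := by
    have hαvs : s*(α*(1+s)) = s*(s+(2-τ)) := by rw [hαval]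
    have key : s*α*(1+s) < (2-τ)*(1+s) := by nlinarith
    exact lt_of_mul_lt_mul_right key h1s.le
  have hslt : s < α := by
    have key : s*(1+s) < α*(1+s) := by rw [hαval]; nlinarith
    exact lt_of_mul_lt_mul_right key h1s.le
  have hβ1 : β < 1 := (div_lt_one hαpos).mpr hslt
  set δ : ℝ := min (2 - τ - s*α) (1 - β) with hδdef
  have hδ1 : (0:ℝ) < 2 - τ - s*α := by linarith
  have hδ2 : (0:ℝ) < 1 - β := by linarith
  have hδ : 0 < δ := lt_min hδ1 hδ2
  have hdmin1 : δ ≤ 2 - τ - s*α := min_le_left _ _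
  have hdmin2 : δ ≤ 1 - β := min_le_right _ _
  clear_value s α β δ
  have hτρ : (0:ℝ) < τ*ρ := mul_pos hτ₀ hρ
  have hδρ : (0:ℝ) < δ*ρ := mul_pos hδ hρ
  -- first-order conditions of the subproblems
  have P1 : ∀ k, -(ContinuousLinearMap.adjoint A₁
      (y k + ρ • (A₁ (x₁ (k+1)) + A₂ (x₂ k) - b))) ∈ SubderivAt f₁ (x₁ (k+1)) := by
    intro k
    have hmin : ∀ z, f₁ (x₁ (k+1)) + ⟪y k, A₁ (x₁ (k+1)) + (A₂ (x₂ k) - b)⟫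
        + ρ/2 * ‖A₁ (x₁ (k+1)) + (A₂ (x₂ k) - b)‖^2
        ≤ f₁ z + ⟪y k, A₁ z + (A₂ (x₂ k) - b)⟫ + ρ/2 * ‖A₁ z + (A₂ (x₂ k) - b)‖^2 := by
      intro z
      have h := (isMinOn_iff.mp (iterx₁ k)) z (mem_univ z)
      simp only [Augmented_Lagrangian_Function] at h
      have e1 : A₁ (x₁ (k+1)) + A₂ (x₂ k) - b = A₁ (x₁ (k+1)) + (A₂ (x₂ k) - b) :=
        add_sub_assoc _ _ _
      have e2 : A₁ z + A₂ (x₂ k) - b = A₁ z + (A₂ (x₂ k) - b) := add_sub_assoc _ _ _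
      rw [e1, e2] at h
      linarith
    have hf := foc cf₁ A₁ (y k) (A₂ (x₂ k) - b) hρ hmin
    have e3 : A₁ (x₁ (k+1)) + (A₂ (x₂ k) - b) = A₁ (x₁ (k+1)) + A₂ (x₂ k) - b :=
      (add_sub_assoc _ _ _).symm
    rw [e3] at hf
    exact hf
  have P2 : ∀ k, -(ContinuousLinearMap.adjoint A₂
      (y k + ρ • (A₁ (x₁ (k+1)) + A₂ (x₂ (k+1)) - b))) ∈ SubderivAt f₂ (x₂ (k+1)) := by
    intro k
    have hmin : ∀ z, f₂ (x₂ (k+1)) + ⟪y k, A₂ (x₂ (k+1)) + (A₁ (x₁ (k+1)) - b)⟫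
        + ρ/2 * ‖A₂ (x₂ (k+1)) + (A₁ (x₁ (k+1)) - b)‖^2
        ≤ f₂ z + ⟪y k, A₂ z + (A₁ (x₁ (k+1)) - b)⟫ + ρ/2 * ‖A₂ z + (A₁ (x₁ (k+1)) - b)‖^2 := by
      intro z
      have h := (isMinOn_iff.mp (iterx₂ k)) z (mem_univ z)
      simp only [Augmented_Lagrangian_Function] at h
      have e1 : A₁ (x₁ (k+1)) + A₂ (x₂ (k+1)) - b = A₂ (x₂ (k+1)) + (A₁ (x₁ (k+1)) - b) := by
        abel
      have e2 : A₁ (x₁ (k+1)) + A₂ z - b = A₂ z + (A₁ (x₁ (k+1)) - b) := by abel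
      rw [e1, e2] at h
      linarith
    have hf := foc cf₂ A₂ (y k) (A₁ (x₁ (k+1)) - b) hρ hmin
    have e3 : A₂ (x₂ (k+1)) + (A₁ (x₁ (k+1)) - b) = A₁ (x₁ (k+1)) + A₂ (x₂ (k+1)) - b := by
      abel
    rw [e3] at hf
    exact hf
  -- residual notation (as plain functions)
  have key_nonneg : ∀ (g : F), (0:ℝ) ≤ ‖g‖^2 := fun g => pow_nonneg (norm_nonneg g) 2
  have hsαρ : (0:ℝ) ≤ s*α*ρ := mul_nonneg (mul_nonneg hs0 hαpos.le) hρ.le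
  have hinvτρ : (0:ℝ) ≤ 1/(τ*ρ) := le_of_lt (div_pos one_pos hτρ)
  -- Lyapunov analysis w.r.t. the given KKT point
  have hlyap := lyapunov_step f₁ f₂ A₁ A₂ b ρ τ s α β hρ hτ₀ hsdef.ge hαpos hβ x₁ x₂ y
    P1 P2 itery x₁s x₂s ys kkt₁ kkt₂ kkt₃
  -- the descent sequence
  have hG0 : ∀ k : ℕ, (0:ℝ) ≤ 1/(τ*ρ) * ‖y (k+1) - ys‖^2 + ρ * ‖A₂ (x₂ (k+1)) - A₂ x₂s‖^2
      + s*α*ρ * ‖A₁ (x₁ (k+1)) + A₂ (x₂ (k+1)) - b‖^2 := fun k =>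
    add_nonneg (add_nonneg (mul_nonneg hinvτρ (key_nonneg _)) (mul_nonneg hρ.le (key_nonneg _)))
      (mul_nonneg hsαρ (key_nonneg _))
  have ha0 : ∀ k : ℕ, (0:ℝ) ≤ δ*ρ*(‖A₁ (x₁ (k+2)) + A₂ (x₂ (k+2)) - b‖^2
      + ‖A₂ (x₂ (k+2)) - A₂ (x₂ (k+1))‖^2) := fun k =>
    mul_nonneg hδρ.le (add_nonneg (key_nonneg _) (key_nonneg _))
  have hstep : ∀ k : ℕ,
      (1/(τ*ρ) * ‖y (k+2) - ys‖^2 + ρ * ‖A₂ (x₂ (k+2)) - A₂ x₂s‖^2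
        + s*α*ρ * ‖A₁ (x₁ (k+2)) + A₂ (x₂ (k+2)) - b‖^2)
      + δ*ρ*(‖A₁ (x₁ (k+2)) + A₂ (x₂ (k+2)) - b‖^2 + ‖A₂ (x₂ (k+2)) - A₂ (x₂ (k+1))‖^2)
      ≤ 1/(τ*ρ) * ‖y (k+1) - ys‖^2 + ρ * ‖A₂ (x₂ (k+1)) - A₂ x₂s‖^2
        + s*α*ρ * ‖A₁ (x₁ (k+1)) + A₂ (x₂ (k+1)) - b‖^2 := by
    intro k
    have hl := hlyap k
    have hd1 : δ ≤ 2 - τ - s*α := hdmin1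
    have hd2 : δ ≤ 1 - β := hdmin2
    have m1 : δ*ρ*‖A₁ (x₁ (k+2)) + A₂ (x₂ (k+2)) - b‖^2
        ≤ (2 - τ - s*α)*ρ*‖A₁ (x₁ (k+2)) + A₂ (x₂ (k+2)) - b‖^2 :=
      mul_le_mul_of_nonneg_right (mul_le_mul_of_nonneg_right hd1 hρ.le) (key_nonneg _)
    have m2 : δ*ρ*‖A₂ (x₂ (k+2)) - A₂ (x₂ (k+1))‖^2
        ≤ (1 - β)*ρ*‖A₂ (x₂ (k+2)) - A₂ (x₂ (k+1))‖^2 :=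
      mul_le_mul_of_nonneg_right (mul_le_mul_of_nonneg_right hd2 hρ.le) (key_nonneg _)
    linarith [hl, m1, m2]
  obtain ⟨hGanti, hsummable⟩ := descent_seq hG0 ha0 hstep
  have haten : Tendsto (fun k => δ*ρ*(‖A₁ (x₁ (k+2)) + A₂ (x₂ (k+2)) - b‖^2
      + ‖A₂ (x₂ (k+2)) - A₂ (x₂ (k+1))‖^2)) atTop (𝓝 0) :=
    hsummable.tendsto_atTop_zero
  -- residuals tend to zero
  have hrsq2 : Tendsto (fun k => ‖A₁ (x₁ (k+2)) + A₂ (x₂ (k+2)) - b‖^2) atTop (𝓝 0) := by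
    apply squeeze_zero (fun k => key_nonneg _) (g := fun k =>
      (1/(δ*ρ)) * (δ*ρ*(‖A₁ (x₁ (k+2)) + A₂ (x₂ (k+2)) - b‖^2
        + ‖A₂ (x₂ (k+2)) - A₂ (x₂ (k+1))‖^2)))
    · intro k
      have h1 : (1/(δ*ρ)) * (δ*ρ*(‖A₁ (x₁ (k+2)) + A₂ (x₂ (k+2)) - b‖^2
          + ‖A₂ (x₂ (k+2)) - A₂ (x₂ (k+1))‖^2))
          = ‖A₁ (x₁ (k+2)) + A₂ (x₂ (k+2)) - b‖^2 + ‖A₂ (x₂ (k+2)) - A₂ (x₂ (k+1))‖^2 := by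
        field_simp
      rw [h1]
      linarith [key_nonneg (A₂ (x₂ (k+2)) - A₂ (x₂ (k+1)))]
    · have := haten.const_mul (1/(δ*ρ))
      simpa using this
  have hvsq2 : Tendsto (fun k => ‖A₂ (x₂ (k+2)) - A₂ (x₂ (k+1))‖^2) atTop (𝓝 0) := by
    apply squeeze_zero (fun k => key_nonneg _) (g := fun k =>
      (1/(δ*ρ)) * (δ*ρ*(‖A₁ (x₁ (k+2)) + A₂ (x₂ (k+2)) - b‖^2
        + ‖A₂ (x₂ (k+2)) - A₂ (x₂ (k+1))‖^2)))
    · intro k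
      have h1 : (1/(δ*ρ)) * (δ*ρ*(‖A₁ (x₁ (k+2)) + A₂ (x₂ (k+2)) - b‖^2
          + ‖A₂ (x₂ (k+2)) - A₂ (x₂ (k+1))‖^2))
          = ‖A₁ (x₁ (k+2)) + A₂ (x₂ (k+2)) - b‖^2 + ‖A₂ (x₂ (k+2)) - A₂ (x₂ (k+1))‖^2 := by
        field_simp
      rw [h1]
      linarith [key_nonneg (A₁ (x₁ (k+2)) + A₂ (x₂ (k+2)) - b)]
    · have := haten.const_mul (1/(δ*ρ))
      simpa using this
  have hr_full : Tendsto (fun k => A₁ (x₁ k) + A₂ (x₂ k) - b) atTop (𝓝 0) := by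
    have h1 : Tendsto (fun k => A₁ (x₁ (k+2)) + A₂ (x₂ (k+2)) - b) atTop (𝓝 0) :=
      tendsto_zero_of_normsq hrsq2
    exact (tendsto_add_atTop_iff_nat 2).mp h1
  have hv_full : Tendsto (fun k => A₂ (x₂ (k+1)) - A₂ (x₂ k)) atTop (𝓝 0) := by
    have h1 : Tendsto (fun k => A₂ (x₂ (k+2)) - A₂ (x₂ (k+1))) atTop (𝓝 0) :=
      tendsto_zero_of_normsq hvsq2
    exact (tendsto_add_atTop_iff_nat 1).mp
      (h1 : Tendsto (fun k => A₂ (x₂ (k+1+1)) - A₂ (x₂ (k+1))) atTop (𝓝 0))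
  have hr1 : Tendsto (fun k => A₁ (x₁ (k+1)) + A₂ (x₂ (k+1)) - b) atTop (𝓝 0) :=
    (tendsto_add_atTop_iff_nat 1).mpr hr_full
  -- antilipschitz constants from full column rank
  obtain ⟨K₁, hK₁pos, hK₁⟩ := (A₁ : E₁ →ₗ[ℝ] F).injective_iff_antilipschitz.mp fullrank₁
  obtain ⟨K₂, hK₂pos, hK₂⟩ := (A₂ : E₂ →ₗ[ℝ] F).injective_iff_antilipschitz.mp fullrank₂
  have hK₁' : ∀ a c : E₁, ‖a - c‖ ≤ (K₁:ℝ) * ‖A₁ a - A₁ c‖ := by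
    intro a c
    have h := hK₁.le_mul_dist a c
    rwa [dist_eq_norm, dist_eq_norm] at h
  have hK₂' : ∀ a c : E₂, ‖a - c‖ ≤ (K₂:ℝ) * ‖A₂ a - A₂ c‖ := by
    intro a c
    have h := hK₂.le_mul_dist a c
    rwa [dist_eq_norm, dist_eq_norm] at h
  -- uniform bounds on the iterates
  set C₀ : ℝ := 1/(τ*ρ) * ‖y (0+1) - ys‖^2 + ρ * ‖A₂ (x₂ (0+1)) - A₂ x₂s‖^2
      + s*α*ρ * ‖A₁ (x₁ (0+1)) + A₂ (x₂ (0+1)) - b‖^2 with hC₀def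
  clear_value C₀
  have hGle : ∀ k : ℕ, 1/(τ*ρ) * ‖y (k+1) - ys‖^2 + ρ * ‖A₂ (x₂ (k+1)) - A₂ x₂s‖^2
      + s*α*ρ * ‖A₁ (x₁ (k+1)) + A₂ (x₂ (k+1)) - b‖^2 ≤ C₀ :=
    fun k => by rw [hC₀def]; exact hGanti 0 k (Nat.zero_le k)
  have h_y : ∀ k : ℕ, ‖y (k+1) - ys‖ ≤ Real.sqrt ((τ*ρ)*C₀) := by
    intro k
    have hGk := hGle k
    have h1 : 1/(τ*ρ) * ‖y (k+1) - ys‖^2 ≤ C₀ := by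
      have n1 : (0:ℝ) ≤ ρ * ‖A₂ (x₂ (k+1)) - A₂ x₂s‖^2 := mul_nonneg hρ.le (key_nonneg _)
      have n2 : (0:ℝ) ≤ s*α*ρ * ‖A₁ (x₁ (k+1)) + A₂ (x₂ (k+1)) - b‖^2 :=
        mul_nonneg hsαρ (key_nonneg _)
      linarith
    have h3 := mul_le_mul_of_nonneg_left h1 hτρ.le
    have h4 : (τ*ρ)*(1/(τ*ρ) * ‖y (k+1) - ys‖^2) = ‖y (k+1) - ys‖^2 := by field_simp
    have h2 : ‖y (k+1) - ys‖^2 ≤ (τ*ρ)*C₀ := by linarith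
    calc ‖y (k+1) - ys‖ = Real.sqrt (‖y (k+1) - ys‖^2) :=
          (Real.sqrt_sq (norm_nonneg _)).symm
      _ ≤ Real.sqrt ((τ*ρ)*C₀) := Real.sqrt_le_sqrt h2
  set My : ℝ := max ‖y 0 - ys‖ (Real.sqrt ((τ*ρ)*C₀)) with hMydef
  clear_value My
  have h_yall : ∀ k : ℕ, ‖y k - ys‖ ≤ My := by
    intro k
    cases k with
    | zero => rw [hMydef]; exact le_max_left _ _
    | succ n => exact le_trans (h_y n) (by rw [hMydef]; exact le_max_right _ _)
  set M2 : ℝ := Real.sqrt (C₀/ρ) with hM2def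
  clear_value M2
  have h_2 : ∀ k : ℕ, ‖A₂ (x₂ (k+1)) - A₂ x₂s‖ ≤ M2 := by
    intro k
    have hGk := hGle k
    have n1 : (0:ℝ) ≤ 1/(τ*ρ) * ‖y (k+1) - ys‖^2 := mul_nonneg hinvτρ (key_nonneg _)
    have n2 : (0:ℝ) ≤ s*α*ρ * ‖A₁ (x₁ (k+1)) + A₂ (x₂ (k+1)) - b‖^2 :=
      mul_nonneg hsαρ (key_nonneg _)
    have h2 : ‖A₂ (x₂ (k+1)) - A₂ x₂s‖^2 ≤ C₀/ρ := (le_div_iff₀ hρ).mpr (by linarith)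
    calc ‖A₂ (x₂ (k+1)) - A₂ x₂s‖ = Real.sqrt (‖A₂ (x₂ (k+1)) - A₂ x₂s‖^2) :=
          (Real.sqrt_sq (norm_nonneg _)).symm
      _ ≤ M2 := by rw [hM2def]; exact Real.sqrt_le_sqrt h2
  set Mr : ℝ := 2*My/(τ*ρ) with hMrdef
  clear_value Mr
  have h_r : ∀ k : ℕ, ‖A₁ (x₁ (k+1)) + A₂ (x₂ (k+1)) - b‖ ≤ Mr := by
    intro k
    have hid : (τ*ρ) • (A₁ (x₁ (k+1)) + A₂ (x₂ (k+1)) - b) = (y (k+1) - ys) - (y k - ys) := by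
      rw [itery k]; module
    have h1 : (τ*ρ) * ‖A₁ (x₁ (k+1)) + A₂ (x₂ (k+1)) - b‖
        = ‖(y (k+1) - ys) - (y k - ys)‖ := by
      rw [← hid, norm_smul, Real.norm_eq_abs, abs_of_pos hτρ]
    have h2 : ‖(y (k+1) - ys) - (y k - ys)‖ ≤ 2*My := by
      calc ‖(y (k+1) - ys) - (y k - ys)‖ ≤ ‖y (k+1) - ys‖ + ‖y k - ys‖ := norm_sub_le _ _
        _ ≤ 2*My := by linarith [h_yall (k+1), h_yall k]
    rw [hMrdef]
    rw [le_div_iff₀ hτρ]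
    linarith
  have h_1 : ∀ k : ℕ, ‖A₁ (x₁ (k+1)) - A₁ x₁s‖ ≤ Mr + M2 := by
    intro k
    have hid2 : A₁ (x₁ (k+1)) - A₁ x₁s
        = (A₁ (x₁ (k+1)) + A₂ (x₂ (k+1)) - b) - (A₂ (x₂ (k+1)) - A₂ x₂s) := by
      rw [← kkt₃]; abel
    rw [hid2]
    exact le_trans (norm_sub_le _ _) (add_le_add (h_r k) (h_2 k))
  -- bounded iterates in the product space
  set R : ℝ := max (‖x₁s‖ + (K₁:ℝ)*(Mr+M2)) (max (‖x₂s‖ + (K₂:ℝ)*M2) (‖ys‖ + My)) with hRdef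
  clear_value R
  have hmem : ∀ k : ℕ,
      (⟨x₁ (k+1), x₂ (k+1), y (k+1)⟩ : E₁ × E₂ × F) ∈ Metric.closedBall 0 R := by
    intro k
    rw [mem_closedBall_zero_iff, Prod.norm_def, Prod.norm_def, hRdef]
    have b1 : ‖x₁ (k+1)‖ ≤ ‖x₁s‖ + (K₁:ℝ)*(Mr+M2) := by
      have h1 := hK₁' (x₁ (k+1)) x₁s
      have h2 : (K₁:ℝ) * ‖A₁ (x₁ (k+1)) - A₁ x₁s‖ ≤ (K₁:ℝ)*(Mr+M2) :=
        mul_le_mul_of_nonneg_left (h_1 k) (K₁.coe_nonneg)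
      have h3 := norm_sub_norm_le (x₁ (k+1)) x₁s
      linarith
    have b2 : ‖x₂ (k+1)‖ ≤ ‖x₂s‖ + (K₂:ℝ)*M2 := by
      have h1 := hK₂' (x₂ (k+1)) x₂s
      have h2 : (K₂:ℝ) * ‖A₂ (x₂ (k+1)) - A₂ x₂s‖ ≤ (K₂:ℝ)*M2 :=
        mul_le_mul_of_nonneg_left (h_2 k) (K₂.coe_nonneg)
      have h3 := norm_sub_norm_le (x₂ (k+1)) x₂s
      linarith
    have b3 : ‖y (k+1)‖ ≤ ‖ys‖ + My := by
      have h1 := h_yall (k+1)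
      have h3 := norm_sub_norm_le (y (k+1)) ys
      linarith
    exact max_le (le_trans b1 (le_max_left _ _))
      (max_le (le_trans b2 (le_trans (le_max_left _ _) (le_max_right _ _)))
        (le_trans b3 (le_trans (le_max_right _ _) (le_max_right _ _))))
  -- Bolzano-Weierstrass
  obtain ⟨L, -, φ, hφmono, hWtend⟩ :=
    tendsto_subseq_of_bounded (Metric.isBounded_closedBall (x := (0 : E₁ × E₂ × F)) (r := R))
      hmem
  have hφat : Tendsto φ atTop atTop := hφmono.tendsto_atTop
  -- convergence of components along the subsequence
  have hx1φ : Tendsto (fun j => x₁ (φ j + 1)) atTop (𝓝 L.1) := by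
    have h := (continuous_fst.tendsto L).comp hWtend
    simpa [Function.comp_def] using h
  have hx2φ : Tendsto (fun j => x₂ (φ j + 1)) atTop (𝓝 L.2.1) := by
    have h := ((continuous_fst.comp continuous_snd).tendsto L).comp hWtend
    simpa [Function.comp_def] using h
  have hyφ1 : Tendsto (fun j => y (φ j + 1)) atTop (𝓝 L.2.2) := by
    have h := ((continuous_snd.comp continuous_snd).tendsto L).comp hWtend
    simpa [Function.comp_def] using h
  have hrφ : Tendsto (fun j => A₁ (x₁ (φ j + 1)) + A₂ (x₂ (φ j + 1)) - b) atTop (𝓝 0) := by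
    have h := hr1.comp hφat
    simpa [Function.comp_def] using h
  have hvφ : Tendsto (fun j => A₂ (x₂ (φ j + 1)) - A₂ (x₂ (φ j))) atTop (𝓝 0) := by
    have h := hv_full.comp hφat
    simpa [Function.comp_def] using h
  have hyφ0 : Tendsto (fun j => y (φ j)) atTop (𝓝 L.2.2) := by
    have heq : (fun j => y (φ j)) = fun j => y (φ j + 1)
        - (τ*ρ) • (A₁ (x₁ (φ j + 1)) + A₂ (x₂ (φ j + 1)) - b) := by
      funext j
      rw [itery (φ j)]; module
    rw [heq]
    have h := hyφ1.sub (hrφ.const_smul (τ*ρ))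
    simpa using h
  -- the limit point is a KKT point
  have hfeas : A₁ L.1 + A₂ L.2.1 = b := by
    have ht : Tendsto (fun j => A₁ (x₁ (φ j + 1)) + A₂ (x₂ (φ j + 1)) - b) atTop
        (𝓝 (A₁ L.1 + A₂ L.2.1 - b)) := by
      have t1 : Tendsto (fun j => A₁ (x₁ (φ j + 1))) atTop (𝓝 (A₁ L.1)) := by
        have h := (A₁.continuous.tendsto L.1).comp hx1φ
        simpa [Function.comp_def] using h
      have t2 : Tendsto (fun j => A₂ (x₂ (φ j + 1))) atTop (𝓝 (A₂ L.2.1)) := by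
        have h := (A₂.continuous.tendsto L.2.1).comp hx2φ
        simpa [Function.comp_def] using h
      exact (t1.add t2).sub_const b
    have h0 := tendsto_nhds_unique ht hrφ
    exact sub_eq_zero.mp h0
  have hcont1 : Continuous f₁ := continuousOn_univ.mp
    (cf₁.continuousOn isOpen_univ)
  have hcont2 : Continuous f₂ := continuousOn_univ.mp
    (cf₂.continuousOn isOpen_univ)
  have hkkt2'' : -(ContinuousLinearMap.adjoint A₂ L.2.2) ∈ SubderivAt f₂ L.2.1 := by
    intro z
    have harg : Tendsto (fun j => y (φ j)
        + ρ • (A₁ (x₁ (φ j + 1)) + A₂ (x₂ (φ j + 1)) - b)) atTop (𝓝 L.2.2) := by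
      have h := hyφ0.add (hrφ.const_smul ρ)
      simpa using h
    have hg : Tendsto (fun j => -(ContinuousLinearMap.adjoint A₂ (y (φ j)
        + ρ • (A₁ (x₁ (φ j + 1)) + A₂ (x₂ (φ j + 1)) - b)))) atTop
        (𝓝 (-(ContinuousLinearMap.adjoint A₂ L.2.2))) := by
      have h := (((ContinuousLinearMap.adjoint A₂).continuous.tendsto L.2.2).comp harg).neg
      simpa [Function.comp_def] using h
    have hf2 : Tendsto (fun j => f₂ (x₂ (φ j + 1))) atTop (𝓝 (f₂ L.2.1)) := by
      have h := (hcont2.tendsto L.2.1).comp hx2φ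
      simpa [Function.comp_def] using h
    have hlhs : Tendsto (fun j => f₂ (x₂ (φ j + 1)) + ⟪-(ContinuousLinearMap.adjoint A₂
        (y (φ j) + ρ • (A₁ (x₁ (φ j + 1)) + A₂ (x₂ (φ j + 1)) - b))), z - x₂ (φ j + 1)⟫)
        atTop (𝓝 (f₂ L.2.1 + ⟪-(ContinuousLinearMap.adjoint A₂ L.2.2), z - L.2.1⟫)) :=
      hf2.add (hg.inner (tendsto_const_nhds.sub hx2φ))
    exact le_of_tendsto hlhs (Eventually.of_forall (fun j => P2 (φ j) z))
  have hkkt1'' : -(ContinuousLinearMap.adjoint A₁ L.2.2) ∈ SubderivAt f₁ L.1 := by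
    intro z
    have hexp : (fun j => A₁ (x₁ (φ j + 1)) + A₂ (x₂ (φ j)) - b)
        = fun j => (A₁ (x₁ (φ j + 1)) + A₂ (x₂ (φ j + 1)) - b)
          - (A₂ (x₂ (φ j + 1)) - A₂ (x₂ (φ j))) := by
      funext j; abel
    have hargv : Tendsto (fun j => A₁ (x₁ (φ j + 1)) + A₂ (x₂ (φ j)) - b) atTop (𝓝 0) := by
      rw [hexp]
      have h := hrφ.sub hvφ
      simpa using h
    have harg : Tendsto (fun j => y (φ j)
        + ρ • (A₁ (x₁ (φ j + 1)) + A₂ (x₂ (φ j)) - b)) atTop (𝓝 L.2.2) := by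
      have h := hyφ0.add (hargv.const_smul ρ)
      simpa using h
    have hg : Tendsto (fun j => -(ContinuousLinearMap.adjoint A₁ (y (φ j)
        + ρ • (A₁ (x₁ (φ j + 1)) + A₂ (x₂ (φ j)) - b)))) atTop
        (𝓝 (-(ContinuousLinearMap.adjoint A₁ L.2.2))) := by
      have h := (((ContinuousLinearMap.adjoint A₁).continuous.tendsto L.2.2).comp harg).neg
      simpa [Function.comp_def] using h
    have hf1 : Tendsto (fun j => f₁ (x₁ (φ j + 1))) atTop (𝓝 (f₁ L.1)) := by
      have h := (hcont1.tendsto L.1).comp hx1φ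
      simpa [Function.comp_def] using h
    have hlhs : Tendsto (fun j => f₁ (x₁ (φ j + 1)) + ⟪-(ContinuousLinearMap.adjoint A₁
        (y (φ j) + ρ • (A₁ (x₁ (φ j + 1)) + A₂ (x₂ (φ j)) - b))), z - x₁ (φ j + 1)⟫)
        atTop (𝓝 (f₁ L.1 + ⟪-(ContinuousLinearMap.adjoint A₁ L.2.2), z - L.1⟫)) :=
      hf1.add (hg.inner (tendsto_const_nhds.sub hx1φ))
    exact le_of_tendsto hlhs (Eventually.of_forall (fun j => P1 (φ j) z))
  -- second Lyapunov analysis, at the limit KKT point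
  have hlyap'' := lyapunov_step f₁ f₂ A₁ A₂ b ρ τ s α β hρ hτ₀ hsdef.ge hαpos hβ x₁ x₂ y
    P1 P2 itery L.1 L.2.1 L.2.2 hkkt1'' hkkt2'' hfeas
  have hG''0 : ∀ k : ℕ, (0:ℝ) ≤ 1/(τ*ρ) * ‖y (k+1) - L.2.2‖^2
      + ρ * ‖A₂ (x₂ (k+1)) - A₂ L.2.1‖^2
      + s*α*ρ * ‖A₁ (x₁ (k+1)) + A₂ (x₂ (k+1)) - b‖^2 := fun k =>
    add_nonneg (add_nonneg (mul_nonneg hinvτρ (key_nonneg _)) (mul_nonneg hρ.le (key_nonneg _)))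
      (mul_nonneg hsαρ (key_nonneg _))
  have hstep'' : ∀ k : ℕ,
      (1/(τ*ρ) * ‖y (k+1+1) - L.2.2‖^2 + ρ * ‖A₂ (x₂ (k+1+1)) - A₂ L.2.1‖^2
        + s*α*ρ * ‖A₁ (x₁ (k+1+1)) + A₂ (x₂ (k+1+1)) - b‖^2)
      ≤ 1/(τ*ρ) * ‖y (k+1) - L.2.2‖^2 + ρ * ‖A₂ (x₂ (k+1)) - A₂ L.2.1‖^2
        + s*α*ρ * ‖A₁ (x₁ (k+1)) + A₂ (x₂ (k+1)) - b‖^2 := by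
    intro k
    have hl := hlyap'' k
    have n1 : (0:ℝ) ≤ (2 - τ - s*α)*ρ * ‖A₁ (x₁ (k+2)) + A₂ (x₂ (k+2)) - b‖^2 :=
      mul_nonneg (mul_nonneg hδ1.le hρ.le) (key_nonneg _)
    have n2 : (0:ℝ) ≤ (1 - β)*ρ * ‖A₂ (x₂ (k+2)) - A₂ (x₂ (k+1))‖^2 :=
      mul_nonneg (mul_nonneg hδ2.le hρ.le) (key_nonneg _)
    linarith
  have t1 : Tendsto (fun j => ‖y (φ j + 1) - L.2.2‖^2) atTop (𝓝 0) :=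
    tendsto_normsq_zero hyφ1
  have t2 : Tendsto (fun j => ‖A₂ (x₂ (φ j + 1)) - A₂ L.2.1‖^2) atTop (𝓝 0) := by
    have h : Tendsto (fun j => A₂ (x₂ (φ j + 1))) atTop (𝓝 (A₂ L.2.1)) := by
      have h' := (A₂.continuous.tendsto L.2.1).comp hx2φ
      simpa [Function.comp_def] using h'
    exact tendsto_normsq_zero h
  have t3 : Tendsto (fun j => ‖A₁ (x₁ (φ j + 1)) + A₂ (x₂ (φ j + 1)) - b‖^2) atTop (𝓝 0) := by
    have h := (hrφ.norm).pow 2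
    simpa using h
  have hsubG : Tendsto (fun j => 1/(τ*ρ) * ‖y (φ j + 1) - L.2.2‖^2
      + ρ * ‖A₂ (x₂ (φ j + 1)) - A₂ L.2.1‖^2
      + s*α*ρ * ‖A₁ (x₁ (φ j + 1)) + A₂ (x₂ (φ j + 1)) - b‖^2) atTop (𝓝 0) := by
    have h := ((t1.const_mul (1/(τ*ρ))).add (t2.const_mul ρ)).add (t3.const_mul (s*α*ρ))
    simpa using h
  have hG''ten : Tendsto (fun k => 1/(τ*ρ) * ‖y (k+1) - L.2.2‖^2
      + ρ * ‖A₂ (x₂ (k+1)) - A₂ L.2.1‖^2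
      + s*α*ρ * ‖A₁ (x₁ (k+1)) + A₂ (x₂ (k+1)) - b‖^2) atTop (𝓝 0) :=
    antitone_tendsto_zero hstep'' hG''0 hφat hsubG
  -- full-sequence convergence of y
  have hy2 : Tendsto (fun k => ‖y (k+1) - L.2.2‖^2) atTop (𝓝 0) := by
    apply squeeze_zero (fun k => key_nonneg _) (g := fun k =>
      (τ*ρ) * (1/(τ*ρ) * ‖y (k+1) - L.2.2‖^2 + ρ * ‖A₂ (x₂ (k+1)) - A₂ L.2.1‖^2
        + s*α*ρ * ‖A₁ (x₁ (k+1)) + A₂ (x₂ (k+1)) - b‖^2))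
    · intro k
      have n1 : (0:ℝ) ≤ ρ * ‖A₂ (x₂ (k+1)) - A₂ L.2.1‖^2 := mul_nonneg hρ.le (key_nonneg _)
      have n2 : (0:ℝ) ≤ s*α*ρ * ‖A₁ (x₁ (k+1)) + A₂ (x₂ (k+1)) - b‖^2 :=
        mul_nonneg hsαρ (key_nonneg _)
      have h4 : (τ*ρ)*(1/(τ*ρ) * ‖y (k+1) - L.2.2‖^2) = ‖y (k+1) - L.2.2‖^2 := by field_simp
      linarith [h4, mul_nonneg hτρ.le n1, mul_nonneg hτρ.le n2]
    · have h := hG''ten.const_mul (τ*ρ)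
      simpa using h
  have hyten : Tendsto y atTop (𝓝 L.2.2) := by
    have h1 : Tendsto (fun k => y (k+1) - L.2.2) atTop (𝓝 0) := tendsto_zero_of_normsq hy2
    have h2 : Tendsto (fun k => y (k+1)) atTop (𝓝 L.2.2) := tendsto_sub_nhds_zero_iff.mp h1
    exact (tendsto_add_atTop_iff_nat 1).mp h2
  -- full-sequence convergence of x₂
  have hx2sq : Tendsto (fun k => ‖A₂ (x₂ (k+1)) - A₂ L.2.1‖^2) atTop (𝓝 0) := by
    apply squeeze_zero (fun k => key_nonneg _) (g := fun k =>
      (1/ρ) * (1/(τ*ρ) * ‖y (k+1) - L.2.2‖^2 + ρ * ‖A₂ (x₂ (k+1)) - A₂ L.2.1‖^2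
        + s*α*ρ * ‖A₁ (x₁ (k+1)) + A₂ (x₂ (k+1)) - b‖^2))
    · intro k
      have n1 : (0:ℝ) ≤ 1/(τ*ρ) * ‖y (k+1) - L.2.2‖^2 := mul_nonneg hinvτρ (key_nonneg _)
      have n2 : (0:ℝ) ≤ s*α*ρ * ‖A₁ (x₁ (k+1)) + A₂ (x₂ (k+1)) - b‖^2 :=
        mul_nonneg hsαρ (key_nonneg _)
      have h4 : (1/ρ)*(ρ * ‖A₂ (x₂ (k+1)) - A₂ L.2.1‖^2) = ‖A₂ (x₂ (k+1)) - A₂ L.2.1‖^2 := by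
        field_simp
      have hinvρ : (0:ℝ) ≤ 1/ρ := le_of_lt (div_pos one_pos hρ)
      linarith [h4, mul_nonneg hinvρ n1, mul_nonneg hinvρ n2]
    · have h := hG''ten.const_mul (1/ρ)
      simpa using h
  have hA2ten : Tendsto (fun k => A₂ (x₂ (k+1)) - A₂ L.2.1) atTop (𝓝 0) :=
    tendsto_zero_of_normsq hx2sq
  have hx2ten : Tendsto x₂ atTop (𝓝 L.2.1) := by
    have hnorm : Tendsto (fun k => ‖x₂ (k+1) - L.2.1‖) atTop (𝓝 0) := by
      apply squeeze_zero (fun k => norm_nonneg _)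
        (g := fun k => (K₂:ℝ) * ‖A₂ (x₂ (k+1)) - A₂ L.2.1‖)
      · exact fun k => hK₂' (x₂ (k+1)) L.2.1
      · have h := (hA2ten.norm).const_mul (K₂:ℝ)
        simpa using h
    have h1 : Tendsto (fun k => x₂ (k+1) - L.2.1) atTop (𝓝 0) :=
      tendsto_zero_iff_norm_tendsto_zero.mpr hnorm
    have h2 : Tendsto (fun k => x₂ (k+1)) atTop (𝓝 L.2.1) := tendsto_sub_nhds_zero_iff.mp h1
    exact (tendsto_add_atTop_iff_nat 1).mp h2
  -- full-sequence convergence of x₁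
  have hA1ten : Tendsto (fun k => A₁ (x₁ (k+1)) - A₁ L.1) atTop (𝓝 0) := by
    have heq1 : (fun k => A₁ (x₁ (k+1)) - A₁ L.1)
        = fun k => (A₁ (x₁ (k+1)) + A₂ (x₂ (k+1)) - b) - (A₂ (x₂ (k+1)) - A₂ L.2.1) := by
      funext k; rw [← hfeas]; abel
    rw [heq1]
    have h := hr1.sub hA2ten
    simpa using h
  have hx1ten : Tendsto x₁ atTop (𝓝 L.1) := by
    have hnorm : Tendsto (fun k => ‖x₁ (k+1) - L.1‖) atTop (𝓝 0) := by
      apply squeeze_zero (fun k => norm_nonneg _)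
        (g := fun k => (K₁:ℝ) * ‖A₁ (x₁ (k+1)) - A₁ L.1‖)
      · exact fun k => hK₁' (x₁ (k+1)) L.1
      · have h := (hA1ten.norm).const_mul (K₁:ℝ)
        simpa using h
    have h1 : Tendsto (fun k => x₁ (k+1) - L.1) atTop (𝓝 0) :=
      tendsto_zero_iff_norm_tendsto_zero.mpr hnorm
    have h2 : Tendsto (fun k => x₁ (k+1)) atTop (𝓝 L.1) := tendsto_sub_nhds_zero_iff.mp h1
    exact (tendsto_add_atTop_iff_nat 1).mp h2
  exact ⟨L.1, L.2.1, L.2.2, ⟨hkkt1'', hkkt2'', hfeas⟩, hx1ten, hx2ten, hyten⟩
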